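/- Let $\sigma \in (5/3, 2)$, let $B$ denote the Beta function, and for $\ell, j \in \{0,1,2\}$ and $m \in \mathbb{N}_0$ define $\omega(\ell,j,m;\sigma) = \frac{\sigma - 2 + j/3 + m}{\sigma - 1 - \ell/3}\, B\big(2 - \sigma + \ell/3,\ \sigma - 2 + j/3 + m\big)$. Then there exist positive continuous functions $C_1(\sigma) \le C_2(\sigma)$ on $(5/3, 2)$ such that $C_1(\sigma)(1+m)^{\sigma - 1 - \ell/3} \le |\omega(\ell,j,m;\sigma)| \le C_2(\sigma)(1+m)^{\sigma - 1 - \ell/3}$ whenever $\ell + j + m \ge 1$. -/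
import Mathlib


open Set

lemma gautschi_upper {y b : ℝ} (hy : 0 < y) (hb0 : 0 < b) (hb1 : b < 1) :
    Real.Gamma (y + b) ≤ Real.Gamma y * y ^ b := by
  have hΓ : 0 < Real.Gamma y := Real.Gamma_pos_of_pos hy
  have h := Real.Gamma_mul_add_mul_le_rpow_Gamma_mul_rpow_Gamma
      (s := y) (t := y + 1) hy (by linarith) (a := 1 - b) (b := b) (by linarith) hb0 (by ring)
  rw [show (1 - b) * y + b * (y + 1) = y + b by ring, Real.Gamma_add_one hy.ne'] at h
  rw [Real.mul_rpow hy.le hΓ.le] at h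
  calc Real.Gamma (y + b) ≤ Real.Gamma y ^ (1 - b) * (y ^ b * Real.Gamma y ^ b) := h
    _ = Real.Gamma y ^ ((1 - b) + b) * y ^ b := by rw [Real.rpow_add hΓ]; ring
    _ = Real.Gamma y * y ^ b := by norm_num

lemma gautschi_lower {y b : ℝ} (hy : 0 < y) (hb0 : 0 < b) (hb1 : b < 1) :
    Real.Gamma y * y ≤ Real.Gamma (y + b) * (y + b) ^ (1 - b) := by
  have hyb : 0 < y + b := by linarith
  have hΓ : 0 < Real.Gamma (y + b) := Real.Gamma_pos_of_pos hyb
  have h := Real.Gamma_mul_add_mul_le_rpow_Gamma_mul_rpow_Gamma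
      (s := y + b) (t := y + b + 1) hyb (by linarith) (a := b) (b := 1 - b) hb0 (by linarith)
      (by ring)
  rw [show b * (y + b) + (1 - b) * (y + b + 1) = y + 1 by ring,
    Real.Gamma_add_one hy.ne', Real.Gamma_add_one hyb.ne',
    Real.mul_rpow hyb.le hΓ.le] at h
  calc Real.Gamma y * y = y * Real.Gamma y := by ring
    _ ≤ Real.Gamma (y + b) ^ b * ((y + b) ^ (1 - b) * Real.Gamma (y + b) ^ (1 - b)) := h
    _ = Real.Gamma (y + b) ^ (b + (1 - b)) * (y + b) ^ (1 - b) := by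
        rw [Real.rpow_add hΓ]; ring
    _ = Real.Gamma (y + b) * (y + b) ^ (1 - b) := by norm_num

noncomputable def gA (l σ : ℝ) : ℝ := Real.Gamma (2 - σ + l / 3) / (σ - 1 - l / 3)

lemma gA_pos {l σ : ℝ} (hl0 : 0 ≤ l) (hl2 : l ≤ 2) (hσ : σ ∈ Ioo (5/3 : ℝ) 2) :
    0 < gA l σ := by
  obtain ⟨h1, h2⟩ := hσ
  exact div_pos (Real.Gamma_pos_of_pos (by linarith)) (by linarith)

lemma gA_cont {l : ℝ} (hl0 : 0 ≤ l) (hl2 : l ≤ 2) :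
    ContinuousOn (gA l) (Ioo (5/3 : ℝ) 2) := by
  intro σ hσ
  obtain ⟨h1, h2⟩ := hσ
  apply ContinuousAt.continuousWithinAt
  apply ContinuousAt.div
  · have hg : ContinuousAt Real.Gamma (2 - σ + l / 3) := by
      refine (Real.differentiableAt_Gamma fun n => ?_).continuousAt
      have h3 : (0:ℝ) < 2 - σ + l / 3 := by linarith
      have h4 : -(n:ℝ) ≤ 0 := by simp
      intro h; rw [h] at h3; linarith
    exact hg.comp (f := fun σ : ℝ => 2 - σ + l / 3) (by fun_prop)
  · fun_prop
  · have : (0:ℝ) < σ - 1 - l / 3 := by linarith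
    exact this.ne'


/-- The real Beta function `B(x,y) = Γ(x)Γ(y)/Γ(x+y)`. -/
noncomputable def realBeta (x y : ℝ) : ℝ := Real.Gamma x * Real.Gamma y / Real.Gamma (x + y)

/-- two-sided bounds for
`ω(ℓ,j,m;σ) = ((σ-2+j/3+m)/(σ-1-ℓ/3)) B(2-σ+ℓ/3, σ-2+j/3+m)` with positive continuous
constants `C₁(σ) ≤ C₂(σ)` on `(5/3,2)`, for `ℓ,j ∈ {0,1,2}`, `m ∈ ℕ`, `ℓ+j+m ≥ 1`. -/
theorem stmt6 :
    ∃ C₁ C₂ : ℝ → ℝ,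
      ContinuousOn C₁ (Ioo (5/3 : ℝ) 2) ∧ ContinuousOn C₂ (Ioo (5/3 : ℝ) 2) ∧
      (∀ σ ∈ Ioo (5/3 : ℝ) 2, 0 < C₁ σ ∧ C₁ σ ≤ C₂ σ) ∧
      (∀ σ ∈ Ioo (5/3 : ℝ) 2, ∀ ℓ j m : ℕ, ℓ ≤ 2 → j ≤ 2 → 1 ≤ ℓ + j + m →
        C₁ σ * ((1 : ℝ) + m) ^ (σ - 1 - (ℓ : ℝ) / 3)
            ≤ |((σ - 2 + (j : ℝ) / 3 + m) / (σ - 1 - (ℓ : ℝ) / 3))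
                * realBeta (2 - σ + (ℓ : ℝ) / 3) (σ - 2 + (j : ℝ) / 3 + m)| ∧
        |((σ - 2 + (j : ℝ) / 3 + m) / (σ - 1 - (ℓ : ℝ) / 3))
                * realBeta (2 - σ + (ℓ : ℝ) / 3) (σ - 2 + (j : ℝ) / 3 + m)|
            ≤ C₂ σ * ((1 : ℝ) + m) ^ (σ - 1 - (ℓ : ℝ) / 3)) := by
  refine ⟨fun σ => (1/12) * min (min (gA 0 σ) (gA 1 σ)) (gA 2 σ),
      fun σ => (4/3) * max (max (gA 0 σ) (gA 1 σ)) (gA 2 σ), ?_, ?_, ?_, ?_⟩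
  · exact (continuousOn_const.mul
      (((gA_cont le_rfl (by norm_num)).inf (gA_cont (by norm_num) (by norm_num))).inf
        (gA_cont (by norm_num) le_rfl)))
  · exact (continuousOn_const.mul
      (((gA_cont le_rfl (by norm_num)).sup (gA_cont (by norm_num) (by norm_num))).sup
        (gA_cont (by norm_num) le_rfl)))
  · intro σ hσ
    have h0 := gA_pos le_rfl (by norm_num) hσ
    have h1 := gA_pos (l := 1) (by norm_num) (by norm_num) hσ
    have h2 := gA_pos (l := 2) (by norm_num) le_rfl hσ
    constructor
    · positivity
    · have hm : min (min (gA 0 σ) (gA 1 σ)) (gA 2 σ) ≤ max (max (gA 0 σ) (gA 1 σ)) (gA 2 σ) :=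
        le_trans (min_le_right _ _) (le_max_right _ _)
      have hminpos : 0 < min (min (gA 0 σ) (gA 1 σ)) (gA 2 σ) := by positivity
      nlinarith
  · intro σ hσ ℓ j m hℓ hj hs
    obtain ⟨hσ1, hσ2⟩ := hσ
    have hℓ' : (ℓ:ℝ) ≤ 2 := by exact_mod_cast hℓ
    have hℓ0 : (0:ℝ) ≤ (ℓ:ℝ) := Nat.cast_nonneg _
    have hj' : (j:ℝ) ≤ 2 := by exact_mod_cast hj
    have hj0 : (0:ℝ) ≤ (j:ℝ) := Nat.cast_nonneg _
    have hm0 : (0:ℝ) ≤ (m:ℝ) := Nat.cast_nonneg _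
    have hs' : (1:ℝ) ≤ (ℓ:ℝ) + (j:ℝ) + (m:ℝ) := by exact_mod_cast hs
    set D : ℝ := σ - 1 - (ℓ:ℝ)/3 with hDdef
    set x : ℝ := σ - 2 + (j:ℝ)/3 + (m:ℝ) with hxdef
    set y : ℝ := (ℓ:ℝ)/3 + (j:ℝ)/3 + (m:ℝ) with hydef
    have hD0 : 0 < D := by rw [hDdef]; linarith
    have hD1 : D < 1 := by rw [hDdef]; linarith
    have hy3 : 1 + (m:ℝ) ≤ 3 * y := by rw [hydef]; linarith
    have hy0 : 0 < y := by linarith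
    have hyub : y ≤ (4/3) * (1 + (m:ℝ)) := by rw [hydef]; linarith
    have hxne : x ≠ 0 := by
      rcases Nat.eq_zero_or_pos m with hm | hm
      · rcases Nat.eq_zero_or_pos j with hjz | hjz
        · have : x = σ - 2 := by rw [hxdef, hm, hjz]; push_cast; ring
          rw [this]; intro h; linarith
        · have : (1:ℝ) ≤ (j:ℝ) := by exact_mod_cast hjz
          have : 0 < x := by rw [hxdef]; linarith
          exact this.ne'
      · have : (1:ℝ) ≤ (m:ℝ) := by exact_mod_cast hm
        have : 0 < x := by rw [hxdef]; linarith
        exact this.ne'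
    have hΓy : 0 < Real.Gamma y := Real.Gamma_pos_of_pos hy0
    have hΓyD : 0 < Real.Gamma (y + D) := Real.Gamma_pos_of_pos (by linarith)
    have hΓa : 0 < Real.Gamma (2 - σ + (ℓ:ℝ)/3) := Real.Gamma_pos_of_pos (by linarith)
    -- rewrite ω
    have hGadd : Real.Gamma (y + D) = x * Real.Gamma x := by
      rw [show y + D = x + 1 by rw [hydef, hDdef, hxdef]; ring]
      exact Real.Gamma_add_one hxne
    have hbeta : realBeta (2 - σ + (ℓ:ℝ)/3) x
        = Real.Gamma (2 - σ + (ℓ:ℝ)/3) * Real.Gamma x / Real.Gamma y := by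
      rw [realBeta, show 2 - σ + (ℓ:ℝ)/3 + x = y by rw [hxdef, hydef]; ring]
    have hωeq : (x / D) * realBeta (2 - σ + (ℓ:ℝ)/3) x
        = gA (ℓ:ℝ) σ * (Real.Gamma (y + D) / Real.Gamma y) := by
      rw [hbeta, hGadd, gA, ← hDdef]; ring
    -- ratio bounds
    set R : ℝ := Real.Gamma (y + D) / Real.Gamma y with hRdef
    have hRup : R ≤ (4/3) * (1 + (m:ℝ)) ^ D := by
      have h1 : R ≤ y ^ D := by
        rw [hRdef, div_le_iff₀ hΓy, mul_comm]
        exact gautschi_upper hy0 hD0 hD1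
      have h2 : y ^ D ≤ ((4/3) * (1 + (m:ℝ))) ^ D :=
        Real.rpow_le_rpow hy0.le hyub hD0.le
      have h3 : ((4/3) * (1 + (m:ℝ))) ^ D = (4/3:ℝ) ^ D * (1 + (m:ℝ)) ^ D :=
        Real.mul_rpow (by norm_num) (by positivity)
      have h4 : (4/3:ℝ) ^ D ≤ (4/3:ℝ) ^ (1:ℝ) :=
        Real.rpow_le_rpow_of_exponent_le (by norm_num) hD1.le
      have h5 : (0:ℝ) ≤ (1 + (m:ℝ)) ^ D := by positivity
      rw [Real.rpow_one] at h4
      calc R ≤ ((4/3) * (1 + (m:ℝ))) ^ D := h1.trans h2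
        _ = (4/3:ℝ) ^ D * (1 + (m:ℝ)) ^ D := h3
        _ ≤ (4/3) * (1 + (m:ℝ)) ^ D := mul_le_mul_of_nonneg_right h4 h5
    have hRlow : (1/12) * (1 + (m:ℝ)) ^ D ≤ R := by
      have hyD : 0 < y + D := by linarith
      have h1 : y * (y + D) ^ (D - 1) ≤ R := by
        have hg := gautschi_lower hy0 hD0 hD1
        have hpow : 0 < (y + D) ^ (1 - D) := Real.rpow_pos_of_pos hyD _
        rw [hRdef, le_div_iff₀ hΓy]
        have key : (y + D) ^ (D - 1) * (y + D) ^ (1 - D) = 1 := by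
          rw [← Real.rpow_add hyD]; norm_num
        calc y * (y + D) ^ (D - 1) * Real.Gamma y
            = (Real.Gamma y * y) * (y + D) ^ (D - 1) := by ring
          _ ≤ (Real.Gamma (y + D) * (y + D) ^ (1 - D)) * (y + D) ^ (D - 1) := by
              apply mul_le_mul_of_nonneg_right hg (Real.rpow_pos_of_pos hyD _).le
          _ = Real.Gamma (y + D) * ((y + D) ^ (D - 1) * (y + D) ^ (1 - D)) := by ring
          _ = Real.Gamma (y + D) := by rw [key, mul_one]
      have h2 : (y + 1) ^ (D - 1) ≤ (y + D) ^ (D - 1) := by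
        apply Real.rpow_le_rpow_of_nonpos hyD (by linarith) (by linarith)
      have h3 : (1/12) * (1 + (m:ℝ)) ^ D ≤ y * (y + 1) ^ (D - 1) := by
        have e1 : y * (y + 1) ^ (D - 1) = (y / (y + 1)) * (y + 1) ^ D := by
          rw [show D - 1 = D + (-1) by ring, Real.rpow_add (by linarith),
            Real.rpow_neg_one]
          field_simp
        have e2 : (1/4:ℝ) ≤ y / (y + 1) := by
          rw [le_div_iff₀ (by linarith)]; linarith
        have e3 : ((1 + (m:ℝ))/3) ^ D ≤ (y + 1) ^ D :=
          Real.rpow_le_rpow (by positivity) (by linarith) hD0.le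
        have e4 : ((1 + (m:ℝ))/3) ^ D = (1 + (m:ℝ)) ^ D * (1/3:ℝ) ^ D := by
          rw [show (1 + (m:ℝ))/3 = (1 + (m:ℝ)) * (1/3) by ring]
          exact Real.mul_rpow (by positivity) (by norm_num)
        have e5 : (1/3:ℝ) ^ (1:ℝ) ≤ (1/3:ℝ) ^ D :=
          Real.rpow_le_rpow_of_exponent_ge (by norm_num) (by norm_num) hD1.le
        rw [Real.rpow_one] at e5
        have e6 : (0:ℝ) ≤ (1 + (m:ℝ)) ^ D := by positivity
        have e7 : (1/3) * (1 + (m:ℝ)) ^ D ≤ (y + 1) ^ D := by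
          calc (1/3) * (1 + (m:ℝ)) ^ D = (1 + (m:ℝ)) ^ D * (1/3) := by ring
            _ ≤ (1 + (m:ℝ)) ^ D * (1/3:ℝ) ^ D := mul_le_mul_of_nonneg_left e5 e6
            _ = ((1 + (m:ℝ))/3) ^ D := e4.symm
            _ ≤ (y + 1) ^ D := e3
        rw [e1]
        have e8 : 0 < (y+1) ^ D := Real.rpow_pos_of_pos (by linarith) _
        calc (1/12) * (1 + (m:ℝ)) ^ D = (1/4) * ((1/3) * (1 + (m:ℝ)) ^ D) := by ring
          _ ≤ (1/4) * (y + 1) ^ D := by linarith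
          _ ≤ (y / (y + 1)) * (y + 1) ^ D := mul_le_mul_of_nonneg_right e2 e8.le
      calc (1/12) * (1 + (m:ℝ)) ^ D ≤ y * (y + 1) ^ (D - 1) := h3
        _ ≤ y * (y + D) ^ (D - 1) := mul_le_mul_of_nonneg_left h2 hy0.le
        _ ≤ R := h1
    -- combine
    have hK : 0 < gA (ℓ:ℝ) σ := gA_pos hℓ0 hℓ' ⟨hσ1, hσ2⟩
    have hωpos : 0 < (x / D) * realBeta (2 - σ + (ℓ:ℝ)/3) x := by
      rw [hωeq]; positivity
    have habs : |(x / D) * realBeta (2 - σ + (ℓ:ℝ)/3) x| = gA (ℓ:ℝ) σ * R := by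
      rw [abs_of_pos hωpos, hωeq]
    have hmin : min (min (gA 0 σ) (gA 1 σ)) (gA 2 σ) ≤ gA (ℓ:ℝ) σ := by
      interval_cases ℓ <;> push_cast <;>
        [exact (min_le_left _ _).trans (min_le_left _ _);
         exact (min_le_left _ _).trans (min_le_right _ _);
         exact min_le_right _ _]
    have hmax : gA (ℓ:ℝ) σ ≤ max (max (gA 0 σ) (gA 1 σ)) (gA 2 σ) := by
      interval_cases ℓ <;> push_cast <;>
        [exact (le_max_left _ _).trans (le_max_left _ _);
         exact (le_max_right _ _).trans (le_max_left _ _);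
         exact le_max_right _ _]
    have hpowpos : (0:ℝ) < (1 + (m:ℝ)) ^ D := by positivity
    constructor
    · rw [habs]
      calc (1/12) * min (min (gA 0 σ) (gA 1 σ)) (gA 2 σ) * (1 + (m:ℝ)) ^ D
          ≤ (1/12) * gA (ℓ:ℝ) σ * (1 + (m:ℝ)) ^ D :=
            mul_le_mul_of_nonneg_right (by linarith) hpowpos.le
        _ = gA (ℓ:ℝ) σ * ((1/12) * (1 + (m:ℝ)) ^ D) := by ring
        _ ≤ gA (ℓ:ℝ) σ * R := mul_le_mul_of_nonneg_left hRlow hK.le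
    · rw [habs]
      calc gA (ℓ:ℝ) σ * R ≤ gA (ℓ:ℝ) σ * ((4/3) * (1 + (m:ℝ)) ^ D) :=
            mul_le_mul_of_nonneg_left hRup hK.le
        _ = (4/3) * gA (ℓ:ℝ) σ * (1 + (m:ℝ)) ^ D := by ring
        _ ≤ (4/3) * max (max (gA 0 σ) (gA 1 σ)) (gA 2 σ) * (1 + (m:ℝ)) ^ D :=
            mul_le_mul_of_nonneg_right (by linarith) hpowpos.le
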